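/- The two-player binary-action example game has a unique monotone equilibrium (up to almost-everywhere equality), namely the cutoff profile s_1*(t_1) = 1 for t_1 ∈ [0, 4/5] and s_1*(t_1) = 2 for t_1 ∈ (4/5, 1], and s_2*(t_2) = 1 for t_2 ∈ [0, 7/8] and s_2*(t_2) = 2 for t_2 ∈ (7/8, 1]: this profile is a monotone equilibrium, and every monotone equilibrium coincides with it almost everywhere. -/

import Mathlib

/-!
Statement 13 (Claim 1, part 2): the two-player binary-action example game has a unique
monotone equilibrium (up to almost-everywhere equality), namely the cutoff profile with
cutoffs 4/5 and 7/8.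
-/

open MeasureTheory Filter Metric

namespace MonotonePerfection

noncomputable section

/-- The binary action space `{1, 2}` of the example game. -/
abbrev Act12 : Type := {a : ℕ // a = 1 ∨ a = 2}

/-- The type space `[0,1]` of the example game. -/
abbrev T01 : Type := ↥(Set.Icc (0:ℝ) 1)

/-- Lebesgue (= uniform) measure on `[0,1]`. -/
noncomputable def μ01 : Measure T01 := (volume : Measure ℝ).comap Subtype.val

/-- Player 1's payoff in the example game (first action is player 1's). -/
noncomputable def u1 (a1 a2 : Act12) (t1 t2 : ℝ) : ℝ :=
  if a1.1 = 1 then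
    (if a2.1 = 1 then 5/2 - 4/3 * t1 else 1/2 + 1/2 * t2)
  else
    (if a2.1 = 1 then 55/24 - t2/6 - 7/6 * t1 else 2 + t2 - 7/6 * t1)

/-- Player 2's payoff in the example game, depending only on the actions. -/
noncomputable def u2 (a1 a2 : Act12) : ℝ :=
  if a1.1 = 1 then (if a2.1 = 1 then -1 else 1)
  else (if a2.1 = 1 then 7 else -1)

/-- Player 1's interim payoff against a pure strategy of player 2 (types are independent
and uniform on `[0,1]`). -/
noncomputable def V1p (a : Act12) (t1 : T01) (s2 : T01 → Act12) : ℝ :=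
  ∫ t2 : T01, u1 a (s2 t2) (t1 : ℝ) (t2 : ℝ) ∂μ01

/-- Player 2's interim payoff against a pure strategy of player 1. -/
noncomputable def V2p (a : Act12) (t2 : T01) (s1 : T01 → Act12) : ℝ :=
  ∫ t1 : T01, u2 (s1 t1) a ∂μ01

/-- Player 1's cutoff strategy: action 1 on [0, 4/5], action 2 on (4/5, 1]. -/
noncomputable def s1star (t : T01) : Act12 :=
  if (t : ℝ) ≤ 4/5 then ⟨1, Or.inl rfl⟩ else ⟨2, Or.inr rfl⟩

/-- Player 2's cutoff strategy: action 1 on [0, 7/8], action 2 on (7/8, 1]. -/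
noncomputable def s2star (t : T01) : Act12 :=
  if (t : ℝ) ≤ 7/8 then ⟨1, Or.inl rfl⟩ else ⟨2, Or.inr rfl⟩

/-- A monotone equilibrium of the example game: a measurable, increasing strategy profile in
which almost every type of each player plays a best response. -/
def IsMonotoneEquilibrium (s1 s2 : T01 → Act12) : Prop :=
  Measurable s1 ∧ Measurable s2 ∧ Monotone s1 ∧ Monotone s2 ∧
  (∀ᵐ t1 ∂μ01, ∀ a : Act12, V1p a t1 s2 ≤ V1p (s1 t1) t1 s2) ∧
  (∀ᵐ t2 ∂μ01, ∀ a : Act12, V2p a t2 s1 ≤ V2p (s2 t2) t2 s1)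

def act1 : Act12 := ⟨1, Or.inl rfl⟩
def act2 : Act12 := ⟨2, Or.inr rfl⟩

lemma act_cases (a : Act12) : a = act1 ∨ a = act2 := by
  rcases a with ⟨a, h | h⟩
  · exact Or.inl (by simp [act1, h])
  · exact Or.inr (by simp [act2, h])

lemma act1_le (a : Act12) : act1 ≤ a := by
  rcases act_cases a with h | h <;> subst h <;> simp [act1, act2, Subtype.mk_le_mk]

lemma le_act2 (a : Act12) : a ≤ act2 := by
  rcases act_cases a with h | h <;> subst h <;> simp [act1, act2, Subtype.mk_le_mk]

lemma measurableSet_Icc01 : MeasurableSet (Set.Icc (0:ℝ) 1) := measurableSet_Icc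

lemma μ01_apply (A : Set T01) (hA : MeasurableSet A) : μ01 A = volume (Subtype.val '' A) :=
  Measure.comap_apply Subtype.val Subtype.coe_injective
    (fun s hs => (MeasurableEmbedding.subtype_coe measurableSet_Icc01).measurableSet_image' hs)
    volume hA

instance : IsProbabilityMeasure μ01 := by
  constructor
  rw [μ01_apply _ MeasurableSet.univ, Set.image_univ, Subtype.range_coe]
  simp

lemma integral_val (f : ℝ → ℝ) :
    ∫ t : T01, f (t : ℝ) ∂μ01 = ∫ x in Set.Icc (0:ℝ) 1, f x := by
  exact integral_subtype_comap measurableSet_Icc01 f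

lemma affine_Ioc (a b p q : ℝ) (hab : a ≤ b) :
    ∫ x in Set.Ioc a b, (p + q * x) = p * (b - a) + q * (b^2 - a^2) / 2 := by
  rw [← intervalIntegral.integral_of_le hab]
  have h1 : IntervalIntegrable (fun _ : ℝ => p) volume a b := intervalIntegrable_const
  have h2 : IntervalIntegrable (fun x : ℝ => q * x) volume a b :=
    (continuous_const.mul continuous_id).intervalIntegrable a b
  rw [intervalIntegral.integral_add h1 h2, intervalIntegral.integral_const,
    intervalIntegral.integral_const_mul, integral_id, smul_eq_mul]
  ring

lemma cutoff_integral (c a₁ b₁ a₂ b₂ : ℝ) (hc0 : 0 ≤ c) (hc1 : c ≤ 1) :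
    ∫ t : T01, (if (t : ℝ) ≤ c then a₁ + b₁ * (t:ℝ) else a₂ + b₂ * (t:ℝ)) ∂μ01 =
      (a₁ * c + b₁ * c^2 / 2) + (a₂ * (1 - c) + b₂ * (1 - c^2) / 2) := by
  have := integral_val (fun x => if x ≤ c then a₁ + b₁ * x else a₂ + b₂ * x)
  rw [this, integral_Icc_eq_integral_Ioc,
    ← Set.Ioc_union_Ioc_eq_Ioc hc0 hc1,
    setIntegral_union (Set.Ioc_disjoint_Ioc_of_le le_rfl) measurableSet_Ioc]
  · have e1 : ∫ x in Set.Ioc 0 c, (if x ≤ c then a₁ + b₁ * x else a₂ + b₂ * x) =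
        ∫ x in Set.Ioc 0 c, (a₁ + b₁ * x) := by
      apply setIntegral_congr_fun measurableSet_Ioc
      intro x hx; simp [hx.2]
    have e2 : ∫ x in Set.Ioc c 1, (if x ≤ c then a₁ + b₁ * x else a₂ + b₂ * x) =
        ∫ x in Set.Ioc c 1, (a₂ + b₂ * x) := by
      apply setIntegral_congr_fun measurableSet_Ioc
      intro x hx; simp [not_le.mpr hx.1]
    rw [e1, e2, affine_Ioc _ _ _ _ hc0, affine_Ioc _ _ _ _ hc1]
    ring
  · apply IntegrableOn.congr_fun (f := fun x => a₁ + b₁ * x)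
    · exact (continuous_const.add (continuous_const.mul continuous_id)).integrableOn_Ioc
    · intro x hx; simp [hx.2]
    · exact measurableSet_Ioc
  · apply IntegrableOn.congr_fun (f := fun x => a₂ + b₂ * x)
    · exact (continuous_const.add (continuous_const.mul continuous_id)).integrableOn_Ioc
    · intro x hx; simp [not_le.mpr hx.1]
    · exact measurableSet_Ioc

/-- Cutoff strategy. -/
noncomputable def cut (c : ℝ) (t : T01) : Act12 :=
  if (t : ℝ) ≤ c then act1 else act2

lemma V1p_cut_one (c : ℝ) (hc0 : 0 ≤ c) (hc1 : c ≤ 1) (t : T01) :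
    V1p act1 t (cut c) =
      (5/2 - 4/3 * (t:ℝ)) * c + (1/2 * (1 - c) + 1/2 * (1 - c^2) / 2) := by
  unfold V1p
  have h : (fun t2 : T01 => u1 act1 (cut c t2) (t:ℝ) (t2:ℝ)) =
      fun t2 : T01 => (if (t2:ℝ) ≤ c then (5/2 - 4/3*(t:ℝ)) + 0 * (t2:ℝ)
        else 1/2 + 1/2 * (t2:ℝ)) := by
    funext t2
    by_cases hle : (t2:ℝ) ≤ c <;> simp [u1, cut, act1, act2, hle]
  rw [h, cutoff_integral _ _ _ _ _ hc0 hc1]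
  ring

lemma V1p_cut_two (c : ℝ) (hc0 : 0 ≤ c) (hc1 : c ≤ 1) (t : T01) :
    V1p act2 t (cut c) =
      ((55/24 - 7/6*(t:ℝ)) * c + (-1/6) * c^2 / 2) +
      ((2 - 7/6*(t:ℝ)) * (1 - c) + 1 * (1 - c^2) / 2) := by
  unfold V1p
  have h : (fun t2 : T01 => u1 act2 (cut c t2) (t:ℝ) (t2:ℝ)) =
      fun t2 : T01 => (if (t2:ℝ) ≤ c then (55/24 - 7/6*(t:ℝ)) + (-1/6) * (t2:ℝ)
        else (2 - 7/6*(t:ℝ)) + 1 * (t2:ℝ)) := by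
    funext t2
    by_cases hle : (t2:ℝ) ≤ c <;> simp [u1, cut, act1, act2, hle] <;> ring
  rw [h, cutoff_integral _ _ _ _ _ hc0 hc1]

lemma V1p_cut_diff (c : ℝ) (hc0 : 0 ≤ c) (hc1 : c ≤ 1) (t : T01) :
    V1p act2 t (cut c) - V1p act1 t (cut c) =
      (7/4 - 41/24 * c - 1/3 * c^2) + (t:ℝ) * (4/3 * c - 7/6) := by
  rw [V1p_cut_one c hc0 hc1 t, V1p_cut_two c hc0 hc1 t]; ring

lemma V2p_cut_one (p : ℝ) (hp0 : 0 ≤ p) (hp1 : p ≤ 1) (t : T01) :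
    V2p act1 t (cut p) = 7 - 8 * p := by
  unfold V2p
  have h : (fun t1 : T01 => u2 (cut p t1) act1) =
      fun t1 : T01 => (if (t1:ℝ) ≤ p then (-1:ℝ) + 0 * (t1:ℝ) else 7 + 0 * (t1:ℝ)) := by
    funext t1
    by_cases hle : (t1:ℝ) ≤ p <;> simp [u2, cut, act1, act2, hle]
  rw [h, cutoff_integral _ _ _ _ _ hp0 hp1]
  ring

lemma V2p_cut_two (p : ℝ) (hp0 : 0 ≤ p) (hp1 : p ≤ 1) (t : T01) :
    V2p act2 t (cut p) = 2 * p - 1 := by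
  unfold V2p
  have h : (fun t1 : T01 => u2 (cut p t1) act2) =
      fun t1 : T01 => (if (t1:ℝ) ≤ p then (1:ℝ) + 0 * (t1:ℝ) else (-1) + 0 * (t1:ℝ)) := by
    funext t1
    by_cases hle : (t1:ℝ) ≤ p <;> simp [u2, cut, act1, act2, hle]
  rw [h, cutoff_integral _ _ _ _ _ hp0 hp1]
  ring

lemma measurableSet_eq_act1 (s : T01 → Act12) (hm : Measurable s) :
    MeasurableSet {t | s t = act1} := by
  have h1 : {t | s t = act1} = s ⁻¹' (Subtype.val ⁻¹' {1}) := by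
    ext t
    simp only [Set.mem_setOf_eq, Set.mem_preimage, Set.mem_singleton_iff]
    constructor
    · intro h; rw [h]; rfl
    · intro h; exact Subtype.ext h
  rw [h1]
  exact hm (measurable_subtype_coe (measurableSet_singleton 1))

lemma μ01_val_lt (x : ℝ) (hx0 : 0 ≤ x) :
    μ01 {t : T01 | (t:ℝ) < x} ≤ ENNReal.ofReal x := by
  rw [show {t : T01 | (t:ℝ) < x} = Subtype.val ⁻¹' Set.Iio x from rfl,
    μ01_apply _ (measurable_subtype_coe measurableSet_Iio)]
  calc volume (Subtype.val '' {t : T01 | (t:ℝ) < x})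
      ≤ volume (Set.Icc 0 x) := by
        apply measure_mono
        rintro y ⟨t, ht, rfl⟩
        exact ⟨t.2.1, le_of_lt ht⟩
    _ = ENNReal.ofReal x := by rw [Real.volume_Icc]; simp [hx0]

lemma μ01_val_le (x : ℝ) (hx1 : x ≤ 1) :
    ENNReal.ofReal x ≤ μ01 {t : T01 | (t:ℝ) ≤ x} := by
  rw [show {t : T01 | (t:ℝ) ≤ x} = Subtype.val ⁻¹' Set.Iic x from rfl,
    μ01_apply _ (measurable_subtype_coe measurableSet_Iic)]
  calc ENNReal.ofReal x = volume (Set.Icc 0 x) := by rw [Real.volume_Icc]; simp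
    _ ≤ volume (Subtype.val '' {t : T01 | (t:ℝ) ≤ x}) := by
        apply measure_mono
        intro y hy
        exact ⟨⟨y, hy.1, le_trans hy.2 hx1⟩, hy.2, rfl⟩

lemma μ01_val_eq (x : ℝ) : μ01 {t : T01 | (t:ℝ) = x} = 0 := by
  rw [show {t : T01 | (t:ℝ) = x} = Subtype.val ⁻¹' {x} from rfl,
    μ01_apply _ (measurable_subtype_coe (measurableSet_singleton x))]
  apply measure_mono_null (t := {x}) _ (Real.volume_singleton)
  rintro y ⟨t, ht, rfl⟩; exact ht

/-- Structure of monotone strategies: a.e. equal to the cutoff at `p = μ{s = act1}`. -/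
lemma monotone_structure (s : T01 → Act12) (hm : Measurable s) (hmono : Monotone s) :
    0 ≤ (μ01 {t | s t = act1}).toReal ∧ (μ01 {t | s t = act1}).toReal ≤ 1 ∧
      s =ᵐ[μ01] cut (μ01 {t | s t = act1}).toReal := by
  set S := {t | s t = act1} with hS
  set p := (μ01 S).toReal with hp
  have hfin : μ01 S ≠ ⊤ := measure_ne_top _ _
  have hp0 : 0 ≤ p := ENNReal.toReal_nonneg
  have hp1 : p ≤ 1 := by
    have h2 := ENNReal.toReal_mono (by norm_num : (1:ENNReal) ≠ ⊤) (prob_le_one (μ := μ01) (s := S))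
    simpa using h2
  refine ⟨hp0, hp1, ?_⟩
  have h_lt : ∀ t : T01, (t:ℝ) < p → s t = act1 := by
    intro t ht
    by_contra hne
    have h2 : s t = act2 := (act_cases (s t)).resolve_left hne
    have hsub : S ⊆ {t' : T01 | (t':ℝ) < (t:ℝ)} := by
      intro t' ht'
      by_contra hnot
      have htt' : t ≤ t' := by
        rw [← Subtype.coe_le_coe]; exact le_of_not_gt hnot
      have := hmono htt'
      rw [h2, ht'] at this
      exact absurd this (by simp [act1, act2, Subtype.mk_le_mk])
    have : μ01 S ≤ ENNReal.ofReal (t:ℝ) :=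
      le_trans (measure_mono hsub) (μ01_val_lt _ t.2.1)
    have : p ≤ (t:ℝ) := by
      rw [hp]
      calc (μ01 S).toReal ≤ (ENNReal.ofReal (t:ℝ)).toReal := ENNReal.toReal_mono (by simp) this
        _ = (t:ℝ) := ENNReal.toReal_ofReal t.2.1
    linarith
  have h_gt : ∀ t : T01, p < (t:ℝ) → s t = act2 := by
    intro t ht
    by_contra hne
    have h1 : s t = act1 := (act_cases (s t)).resolve_right hne
    have hsub : {t' : T01 | (t':ℝ) ≤ (t:ℝ)} ⊆ S := by
      intro t' ht'
      have htt' : t' ≤ t := by rw [← Subtype.coe_le_coe]; exact ht'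
      have h3 := hmono htt'
      rw [h1] at h3
      rcases act_cases (s t') with h4 | h4
      · exact h4
      · rw [h4] at h3
        exact absurd h3 (by simp [act1, act2, Subtype.mk_le_mk])
    have : ENNReal.ofReal (t:ℝ) ≤ μ01 S :=
      le_trans (μ01_val_le _ t.2.2) (measure_mono hsub)
    have : (t:ℝ) ≤ p := by
      rw [hp]
      calc (t:ℝ) = (ENNReal.ofReal (t:ℝ)).toReal := (ENNReal.toReal_ofReal t.2.1).symm
        _ ≤ (μ01 S).toReal := ENNReal.toReal_mono hfin this
    linarith
  rw [Filter.EventuallyEq, ae_iff]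
  apply measure_mono_null _ (μ01_val_eq p)
  intro t hne
  simp only [Set.mem_setOf_eq] at hne ⊢
  by_contra hx
  rcases lt_or_gt_of_ne hx with h | h
  · exact hne (by simp [cut, le_of_lt h, h_lt t h])
  · exact hne (by simp [cut, not_le.mpr h, h_gt t h])

/-- A.e. properties hold at some point of any nontrivial subinterval. -/
lemma exists_ae_in_Ioo (P : T01 → Prop) (hP : ∀ᵐ t ∂μ01, P t)
    (a b : ℝ) (h0 : 0 ≤ a) (hab : a < b) (hb : b ≤ 1) :
    ∃ t : T01, a < (t:ℝ) ∧ (t:ℝ) < b ∧ P t := by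
  by_contra hcon
  push_neg at hcon
  have hsub : {t : T01 | a < (t:ℝ) ∧ (t:ℝ) < b} ⊆ {t | ¬ P t} := by
    intro t ht
    exact fun hPt => (hcon t ht.1 ht.2) hPt
  have hnull : μ01 {t : T01 | a < (t:ℝ) ∧ (t:ℝ) < b} = 0 :=
    measure_mono_null hsub (ae_iff.mp hP)
  have hpos : μ01 {t : T01 | a < (t:ℝ) ∧ (t:ℝ) < b} ≠ 0 := by
    rw [show {t : T01 | a < (t:ℝ) ∧ (t:ℝ) < b} = Subtype.val ⁻¹' Set.Ioo a b from rfl,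
      μ01_apply _ (measurable_subtype_coe measurableSet_Ioo)]
    have himg : Subtype.val '' (Subtype.val ⁻¹' Set.Ioo a b : Set T01) = Set.Ioo a b := by
      ext y
      constructor
      · rintro ⟨t, ht, rfl⟩; exact ht
      · intro hy
        exact ⟨⟨y, le_trans h0 (le_of_lt hy.1), le_trans (le_of_lt hy.2) hb⟩, hy, rfl⟩
    rw [himg, Real.volume_Ioo]
    simp only [ne_eq, ENNReal.ofReal_eq_zero, not_le]
    linarith
  exact hpos hnull

lemma s1star_eq_cut : s1star = cut (4/5) := rfl
lemma s2star_eq_cut : s2star = cut (7/8) := rfl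

lemma cut_measurable (c : ℝ) : Measurable (cut c) := by
  unfold cut
  exact Measurable.ite (measurable_subtype_coe measurableSet_Iic)
    measurable_const measurable_const

lemma cut_monotone (c : ℝ) : Monotone (cut c) := by
  intro t t' h
  by_cases h' : (t':ℝ) ≤ c
  · have : (t:ℝ) ≤ c := le_trans (Subtype.coe_le_coe.mpr h) h'
    simp [cut, this, h']
  · simp only [cut, h', if_false]
    exact le_act2 _

lemma V1p_star_eq (t : T01) : V1p act2 t s2star = V1p act1 t s2star := by
  rw [s2star_eq_cut]
  have h := V1p_cut_diff (7/8) (by norm_num) (by norm_num) t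
  have : V1p act2 t (cut (7/8)) - V1p act1 t (cut (7/8)) = 0 := by rw [h]; ring
  linarith

lemma V2p_star_eq (t : T01) : V2p act2 t s1star = V2p act1 t s1star := by
  rw [s1star_eq_cut, V2p_cut_one (4/5) (by norm_num) (by norm_num) t,
    V2p_cut_two (4/5) (by norm_num) (by norm_num) t]
  norm_num

lemma star_is_equilibrium : IsMonotoneEquilibrium s1star s2star := by
  refine ⟨by rw [s1star_eq_cut]; exact cut_measurable _,
    by rw [s2star_eq_cut]; exact cut_measurable _,
    by rw [s1star_eq_cut]; exact cut_monotone _,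
    by rw [s2star_eq_cut]; exact cut_monotone _, ?_, ?_⟩
  · apply Filter.Eventually.of_forall
    intro t a
    rcases act_cases a with rfl | rfl <;> rcases act_cases (s1star t) with h | h <;>
      rw [h] <;> simp [V1p_star_eq t, le_refl]
  · apply Filter.Eventually.of_forall
    intro t a
    rcases act_cases a with rfl | rfl <;> rcases act_cases (s2star t) with h | h <;>
      rw [h] <;> simp [V2p_star_eq t, le_refl]

lemma act1_ne_act2 : act1 ≠ act2 := by
  intro h
  have := congrArg Subtype.val h
  simp [act1, act2] at this

lemma ae_act1_measure (s : T01 → Act12) (hm : Measurable s)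
    (h : ∀ᵐ t ∂μ01, s t = act1) : (μ01 {t | s t = act1}).toReal = 1 := by
  have hS := measurableSet_eq_act1 s hm
  have hc : μ01 {t | s t = act1}ᶜ = 0 := by
    apply measure_mono_null _ (ae_iff.mp h)
    intro t ht
    exact ht
  have := measure_add_measure_compl hS (μ := μ01)
  rw [hc, add_zero, measure_univ] at this
  rw [this]
  simp

lemma ae_act2_measure (s : T01 → Act12)
    (h : ∀ᵐ t ∂μ01, s t = act2) : (μ01 {t | s t = act1}).toReal = 0 := by
  have hc : μ01 {t | s t = act1} = 0 := by
    apply measure_mono_null _ (ae_iff.mp h)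
    intro t ht
    simp only [Set.mem_setOf_eq] at ht ⊢
    intro h2
    exact act1_ne_act2 (ht.symm.trans h2)
  rw [hc]; simp

set_option maxHeartbeats 1000000 in
lemma uniqueness (s1 s2 : T01 → Act12) (heq : IsMonotoneEquilibrium s1 s2) :
    s1 =ᵐ[μ01] s1star ∧ s2 =ᵐ[μ01] s2star := by
  obtain ⟨hm1, hm2, hmo1, hmo2, hbr1, hbr2⟩ := heq
  obtain ⟨hp0, hp1, hs1ae⟩ := monotone_structure s1 hm1 hmo1
  obtain ⟨hq0, hq1, hs2ae⟩ := monotone_structure s2 hm2 hmo2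
  set p := (μ01 {t | s1 t = act1}).toReal with hpdef
  set q := (μ01 {t | s2 t = act1}).toReal with hqdef
  clear_value p q
  -- interim payoffs only depend on the a.e. class of the opponent strategy
  have hV1 : ∀ a (t : T01), V1p a t s2 = V1p a t (cut q) := by
    intro a t
    unfold V1p
    apply integral_congr_ae
    filter_upwards [hs2ae] with t2 h2
    rw [h2]
  have hV2 : ∀ a (t : T01), V2p a t s1 = V2p a t (cut p) := by
    intro a t
    unfold V2p
    apply integral_congr_ae
    filter_upwards [hs1ae] with t1 h1
    rw [h1]
  -- Step 1 : p = 4/5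
  have hp45 : p = 4/5 := by
    by_contra hne
    rcases lt_or_gt_of_ne hne with hlt | hgt
    · -- p < 4/5 : player 2 strictly prefers action 1, so s2 = act1 a.e., q = 1
      have hq1' : q = 1 := by
        rw [hqdef]
        apply ae_act1_measure s2 hm2
        filter_upwards [hbr2] with t hbr
        rcases act_cases (s2 t) with h | h
        · exact h
        · exfalso
          have := hbr act1
          rw [h, hV2 act1 t, hV2 act2 t,
            V2p_cut_one p hp0 hp1 t, V2p_cut_two p hp0 hp1 t] at this
          linarith
      -- against cut 1, player 1 strictly prefers action 1, so p = 1
      have hp1' : p = 1 := by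
        rw [hpdef]
        apply ae_act1_measure s1 hm1
        filter_upwards [hbr1] with t hbr
        rcases act_cases (s1 t) with h | h
        · exact h
        · exfalso
          have hd := V1p_cut_diff q hq0 hq1 t
          have := hbr act1
          rw [h, hV1 act1 t, hV1 act2 t] at this
          rw [hq1'] at hd this
          have ht1 : (t:ℝ) ≤ 1 := t.2.2
          nlinarith
      linarith
    · -- p > 4/5 : player 2 strictly prefers action 2, so s2 = act2 a.e., q = 0
      have hq0' : q = 0 := by
        rw [hqdef]
        apply ae_act2_measure s2
        filter_upwards [hbr2] with t hbr
        rcases act_cases (s2 t) with h | h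
        · exfalso
          have := hbr act2
          rw [h, hV2 act1 t, hV2 act2 t,
            V2p_cut_one p hp0 hp1 t, V2p_cut_two p hp0 hp1 t] at this
          linarith
        · exact h
      have hp0' : p = 0 := by
        rw [hpdef]
        apply ae_act2_measure s1
        filter_upwards [hbr1] with t hbr
        rcases act_cases (s1 t) with h | h
        · exfalso
          have hd := V1p_cut_diff q hq0 hq1 t
          have := hbr act2
          rw [h, hV1 act1 t, hV1 act2 t] at this
          rw [hq0'] at hd this
          have ht1 : (t:ℝ) ≤ 1 := t.2.2
          nlinarith
        · exact h
      linarith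
  -- first conclusion
  have hconc1 : s1 =ᵐ[μ01] s1star := by
    rw [s1star_eq_cut, ← hp45]
    exact hs1ae
  refine ⟨hconc1, ?_⟩
  -- Step 2 : determine q via player 1's indifference at the cutoff 4/5
  set C : ℝ := 7/4 - 41/24 * q - 1/3 * q^2 with hC
  set L : ℝ := 4/3 * q - 7/6 with hL
  clear_value C L
  have hQ : ∀ᵐ t : T01 ∂μ01, ((t:ℝ) < 4/5 → C + (t:ℝ) * L ≤ 0) ∧
      (4/5 < (t:ℝ) → 0 ≤ C + (t:ℝ) * L) := by
    filter_upwards [hbr1, hs1ae] with t hbr hcut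
    have hd := V1p_cut_diff q hq0 hq1 t
    rw [← hC, ← hL] at hd
    constructor
    · intro hlt
      have h1 : s1 t = act1 := by
        rw [hcut, hp45]; simp [cut, le_of_lt hlt]
      have := hbr act2
      rw [h1, hV1 act1 t, hV1 act2 t] at this
      linarith
    · intro hgt
      have h1 : s1 t = act2 := by
        rw [hcut, hp45]; simp [cut, not_le.mpr hgt]
      have := hbr act1
      rw [h1, hV1 act1 t, hV1 act2 t] at this
      linarith
  -- slope is nonnegative
  have hLnn : 0 ≤ L := by
    obtain ⟨t₁, ht₁a, ht₁b, hQ1⟩ := exists_ae_in_Ioo (fun t : T01 => ((t:ℝ) < 4/5 → C + (t:ℝ) * L ≤ 0) ∧ (4/5 < (t:ℝ) → 0 ≤ C + (t:ℝ) * L)) hQ (3/5) (4/5)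
      (by norm_num) (by norm_num) (by norm_num)
    obtain ⟨t₂, ht₂a, ht₂b, hQ2⟩ := exists_ae_in_Ioo (fun t : T01 => ((t:ℝ) < 4/5 → C + (t:ℝ) * L ≤ 0) ∧ (4/5 < (t:ℝ) → 0 ≤ C + (t:ℝ) * L)) hQ (4/5) 1
      (by norm_num) (by norm_num) (by norm_num)
    have h1 := hQ1.1 ht₁b
    have h2 := hQ2.2 ht₂a
    nlinarith [mul_pos (sub_pos.mpr (lt_trans ht₁b ht₂a)) (sub_pos.mpr ht₁b)]
  -- indifference at the cutoff: C + (4/5) L = 0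
  have hα : C + (4/5) * L = 0 := by
    by_contra hne
    have habs : 0 < |C + (4/5) * L| := abs_pos.mpr hne
    set ε : ℝ := min (1/5) (|C + (4/5) * L| / (2 * (L + 1))) with hε
    clear_value ε
    have hLpos : 0 < L + 1 := by linarith
    have hεpos : 0 < ε := by rw [hε]; exact lt_min (by norm_num) (by positivity)
    have hε15 : ε ≤ 1/5 := by rw [hε]; exact min_le_left _ _
    have hε2 : ε ≤ |C + (4/5) * L| / (2 * (L + 1)) := by rw [hε]; exact min_le_right _ _
    obtain ⟨t₁, ht₁a, ht₁b, hQ1⟩ := exists_ae_in_Ioo (fun t : T01 => ((t:ℝ) < 4/5 → C + (t:ℝ) * L ≤ 0) ∧ (4/5 < (t:ℝ) → 0 ≤ C + (t:ℝ) * L)) hQ (4/5 - ε) (4/5)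
      (by linarith) (by linarith) (by norm_num)
    obtain ⟨t₂, ht₂a, ht₂b, hQ2⟩ := exists_ae_in_Ioo (fun t : T01 => ((t:ℝ) < 4/5 → C + (t:ℝ) * L ≤ 0) ∧ (4/5 < (t:ℝ) → 0 ≤ C + (t:ℝ) * L)) hQ (4/5) (4/5 + ε)
      (by norm_num) (by linarith) (by linarith)
    have h1 := hQ1.1 ht₁b
    have h2 := hQ2.2 ht₂a
    -- C + 4/5 L ≤ (4/5 - t₁) L ≤ ε L and ≥ -(t₂ - 4/5) L ≥ -ε L
    have k1 : (4/5 - (t₁:ℝ)) * L ≤ ε * L :=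
      mul_le_mul_of_nonneg_right (by linarith) hLnn
    have k2 : ((t₂:ℝ) - 4/5) * L ≤ ε * L :=
      mul_le_mul_of_nonneg_right (by linarith) hLnn
    have hub : C + (4/5) * L ≤ ε * L := by nlinarith [k1, h1]
    have hlb : -(ε * L) ≤ C + (4/5) * L := by nlinarith [k2, h2]
    have habs2 : |C + (4/5) * L| ≤ ε * L := abs_le.mpr ⟨hlb, hub⟩
    have : ε * L ≤ |C + (4/5) * L| / (2 * (L + 1)) * L := by
      apply mul_le_mul_of_nonneg_right hε2 hLnn
    have hfin : |C + (4/5) * L| / (2 * (L + 1)) * L < |C + (4/5) * L| := by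
      rw [div_mul_eq_mul_div, div_lt_iff₀ (by linarith)]
      nlinarith [mul_nonneg habs.le hLnn]
    linarith
  -- solve the quadratic: q = 7/8
  have hq78 : q = 7/8 := by
    have hfac : (8 * q - 7) * (5 * q + 14) = 0 := by
      rw [hC, hL] at hα
      linear_combination (-120 : ℝ) * hα
    rcases mul_eq_zero.mp hfac with h | h
    · linarith
    · linarith
  rw [s2star_eq_cut, ← hq78]
  exact hs2ae

/-- **Claim.**  The cutoff profile (s1star, s2star) is a monotone equilibrium of the example
game, and it is the unique monotone equilibrium up to almost-everywhere equality. -/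
theorem example1_unique_monotone_equilibrium :
    IsMonotoneEquilibrium s1star s2star ∧
    ∀ s1 s2 : T01 → Act12, IsMonotoneEquilibrium s1 s2 →
      (s1 =ᵐ[μ01] s1star ∧ s2 =ᵐ[μ01] s2star) :=
  ⟨star_is_equilibrium, fun s1 s2 h => uniqueness s1 s2 h⟩

end

end MonotonePerfection
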